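/- arXiv:0901.4515 — 7 statements merged into one kernel-verified Lean document; each statement's English description precedes it below -/
import Mathlib

section
/- For density matrices ρ, ρ_d evolving under dρ/dt = −i[H₀ + f·H₁, ρ] and dρ_d/dt = −i[H₀, ρ_d] with f = Tr([−iH₁, ρ]ρ_d), the time derivative of V = Tr(ρ_d²) − Tr(ρ·ρ_d) equals −f², hence is ≤ 0. -/
/-!
Both states are moved by the same H₀-commutator flow, and `Tr (X Y)` is invariant under a common
commutator flow because `Tr ([H, X] Y + X [H, Y]) = Tr [H, X Y] = 0`. Hence `Tr (ρd²)` is conserved,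
and in `d/dt Tr (ρ ρd)` only the control term `f • H₁` survives, contributing
`f · Tr ([-i H₁, ρ] ρd) = f²`. As `[-i H₁, ρ]` and `ρd` are Hermitian, `f` is real, so `-f² ≤ 0`.
-/

open Matrix

namespace Matrix

section Derivatives

variable {m 𝕜 𝔸 : Type*} [Fintype m] [NontriviallyNormedField 𝕜] [NormedCommRing 𝔸]
  [NormedAlgebra 𝕜 𝔸] {A B : 𝕜 → Matrix m m 𝔸} {A' B' : Matrix m m 𝔸} {t : 𝕜}

theorem hasDerivAt_mul_apply
    (hA : ∀ i j, HasDerivAt (fun s => A s i j) (A' i j) t)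
    (hB : ∀ i j, HasDerivAt (fun s => B s i j) (B' i j) t) (i k : m) :
    HasDerivAt (fun s => (A s * B s) i k) ((A' * B t + A t * B') i k) t := by
  simp only [mul_apply, add_apply, ← Finset.sum_add_distrib]
  exact HasDerivAt.fun_sum fun j _ => (hA i j).mul (hB j k)

theorem hasDerivAt_trace (hA : ∀ i, HasDerivAt (fun s => A s i i) (A' i i) t) :
    HasDerivAt (fun s => (A s).trace) A'.trace t :=
  HasDerivAt.fun_sum fun i _ => hA i

theorem hasDerivAt_trace_mul
    (hA : ∀ i j, HasDerivAt (fun s => A s i j) (A' i j) t)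
    (hB : ∀ i j, HasDerivAt (fun s => B s i j) (B' i j) t) :
    HasDerivAt (fun s => (A s * B s).trace) ((A' * B t).trace + (A t * B').trace) t := by
  rw [← trace_add]
  exact hasDerivAt_trace fun i => hasDerivAt_mul_apply hA hB i i

end Derivatives

section TraceIdentities

variable {m R : Type*} [Fintype m] [CommRing R]

theorem trace_lie_mul_add_trace_mul_lie (A B C : Matrix m m R) :
    (⁅A, B⁆ * C).trace + (B * ⁅A, C⁆).trace = 0 := by
  simp only [Ring.lie_def, sub_mul, mul_sub, trace_sub, mul_assoc]
  rw [trace_mul_comm A, mul_assoc]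
  abel

theorem trace_smul_lie_add_mul_add_trace_mul_smul_lie (c : R) (H K X Y : Matrix m m R) :
    ((c • ⁅H + K, X⁆) * Y).trace + (X * (c • ⁅H, Y⁆)).trace = c * (⁅K, X⁆ * Y).trace := by
  have h := trace_lie_mul_add_trace_mul_lie H X Y
  simp only [Ring.lie_def, add_mul, mul_add, sub_mul, mul_sub, smul_sub, smul_add, smul_mul_assoc,
    mul_smul_comm, trace_add, trace_sub, trace_smul, smul_eq_mul, mul_assoc] at h ⊢
  linear_combination c * h

theorem IsHermitian.isSelfAdjoint_trace_mul [StarRing R] {A B : Matrix m m R}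
    (hA : A.IsHermitian) (hB : B.IsHermitian) : IsSelfAdjoint (A * B).trace := by
  rw [IsSelfAdjoint, ← trace_conjTranspose, conjTranspose_mul, hA.eq, hB.eq, trace_mul_comm]

end TraceIdentities

end Matrix

theorem IsSelfAdjoint.lie_of_mem_skewAdjoint {R : Type*} [Ring R] [StarRing R] {a b : R}
    (ha : a ∈ skewAdjoint R) (hb : IsSelfAdjoint b) : IsSelfAdjoint ⁅a, b⁆ := by
  rw [skewAdjoint.mem_iff] at ha
  simp only [IsSelfAdjoint, Ring.lie_def, star_sub, star_mul, ha, hb.star_eq, neg_mul, mul_neg]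
  abel

theorem stmt_2_general {n : ℕ} (H₀ H₁ : Matrix (Fin n) (Fin n) ℂ)
    (hH₁ : H₁.IsHermitian)
    (ρ ρd : ℝ → Matrix (Fin n) (Fin n) ℂ)
    (hherm : ∀ t, (ρ t).IsHermitian) (hhermd : ∀ t, (ρd t).IsHermitian)
    (f : ℝ → ℂ)
    (hf : ∀ t, f t = ((((-Complex.I) • H₁) * ρ t - ρ t * ((-Complex.I) • H₁)) * ρd t).trace)
    (hρ : ∀ t i j, HasDerivAt (fun s => ρ s i j)
      (((-Complex.I) • ((H₀ + f t • H₁) * ρ t - ρ t * (H₀ + f t • H₁))) i j) t)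
    (hρd : ∀ t i j, HasDerivAt (fun s => ρd s i j)
      (((-Complex.I) • (H₀ * ρd t - ρd t * H₀)) i j) t)
    (V : ℝ → ℂ) (hV : ∀ t, V t = (ρd t * ρd t).trace - (ρ t * ρd t).trace)
    (t : ℝ) :
    HasDerivAt V (-(f t) ^ 2) t ∧ (-(f t) ^ 2).re ≤ 0 := by
  set c := -Complex.I
  have hft : f t = (⁅c • H₁, ρ t⁆ * ρd t).trace := hf t
  have hρt : ∀ i j, HasDerivAt (fun s => ρ s i j) ((c • ⁅H₀ + f t • H₁, ρ t⁆) i j) t := hρ t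
  have hρdt : ∀ i j, HasDerivAt (fun s => ρd s i j) ((c • ⁅H₀, ρd t⁆) i j) t := hρd t
  have hpurity : HasDerivAt (fun s => (ρd s * ρd s).trace) 0 t := by
    refine (hasDerivAt_trace_mul hρdt hρdt).congr_deriv ?_
    simpa [Ring.lie_def] using trace_smul_lie_add_mul_add_trace_mul_smul_lie c H₀ 0 (ρd t) (ρd t)
  have hoverlap : HasDerivAt (fun s => (ρ s * ρd s).trace) (f t ^ 2) t := by
    refine (hasDerivAt_trace_mul hρt hρdt).congr_deriv ?_
    rw [trace_smul_lie_add_mul_add_trace_mul_smul_lie]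
    simp only [Ring.lie_def, smul_mul_assoc, mul_smul_comm, ← smul_sub, trace_smul,
      smul_eq_mul] at hft ⊢
    linear_combination -(f t) * hft
  have hf_real : IsSelfAdjoint (f t) := by
    rw [hft]
    refine IsHermitian.isSelfAdjoint_trace_mul ?_ (hhermd t)
    exact (hherm t).isSelfAdjoint.lie_of_mem_skewAdjoint
      (hH₁.isSelfAdjoint.smul_mem_skewAdjoint (neg_mem Complex.I_mem_skewAdjoint))
  obtain ⟨r, hr⟩ := Complex.conj_eq_iff_real.mp hf_real
  refine ⟨?_, ?_⟩
  · rw [funext hV, ← zero_sub]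
    exact hpurity.fun_sub hoverlap
  · rw [hr]
    norm_cast
    simpa using sq_nonneg r

theorem stmt_2 {n : ℕ} (H₀ H₁ : Matrix (Fin n) (Fin n) ℂ)
    (hH₀ : H₀.IsHermitian) (hH₁ : H₁.IsHermitian)
    (ρ ρd : ℝ → Matrix (Fin n) (Fin n) ℂ)
    (hherm : ∀ t, (ρ t).IsHermitian) (hhermd : ∀ t, (ρd t).IsHermitian)
    (f : ℝ → ℂ)
    (hf : ∀ t, f t = ((((-Complex.I) • H₁) * ρ t - ρ t * ((-Complex.I) • H₁)) * ρd t).trace)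
    (hρ : ∀ t i j, HasDerivAt (fun s => ρ s i j)
      (((-Complex.I) • ((H₀ + f t • H₁) * ρ t - ρ t * (H₀ + f t • H₁))) i j) t)
    (hρd : ∀ t i j, HasDerivAt (fun s => ρd s i j)
      (((-Complex.I) • (H₀ * ρd t - ρd t * H₀)) i j) t)
    (V : ℝ → ℂ) (hV : ∀ t, V t = (ρd t * ρd t).trace - (ρ t * ρd t).trace)
    (t : ℝ) :
    HasDerivAt V (-(f t) ^ 2) t ∧ (-(f t) ^ 2).re ≤ 0 :=
  stmt_2_general H₀ H₁ hH₁ ρ ρd hherm hhermd f hf hρ hρd V hV t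
end

section
/- Let ρ₁, ρ₂ be n×n Hermitian matrices, H₀ diagonal Hermitian, and H₁ Hermitian. Define ρₖ(t) = e^{−iH₀t}ρₖe^{iH₀t}. If Tr([−iH₁, ρ₁(t)]·ρ₂(t)) = 0 for all t ∈ ℝ, then Tr(Bₘ·[ρ₁,ρ₂]) = 0 for all m ≥ 0, where B₀ = −iH₁ and B_{m+1} = [−iH₀, Bₘ]. -/
/-!
With `X = -iH₀` and `C = [ρ₁, ρ₂]`, cyclicity of the trace turns the hypothesis at time `-t` into
`Tr(e^{tX} B₀ e^{-tX} C) = 0` for all real `t`. Differentiating `e^{tX} B e^{-tX}` gives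
`e^{tX} [X, B] e^{-tX}`, so by induction `Tr(e^{tX} Bₘ e^{-tX} C) = 0` for every `m`, and `t = 0` gives
the claim.
-/

open Matrix

/-- The iterated adjoint brackets B₀ = −iH₁, B_{m+1} = [−iH₀, Bₘ]. -/
noncomputable def adB {n : ℕ} (H₀ H₁ : Matrix (Fin n) (Fin n) ℂ) : ℕ → Matrix (Fin n) (Fin n) ℂ
  | 0 => (-Complex.I) • H₁
  | m + 1 => ((-Complex.I) • H₀) * adB H₀ H₁ m - adB H₀ H₁ m * ((-Complex.I) • H₀)

section ExpConj

variable {𝔸 : Type*} [NormedRing 𝔸] [NormedAlgebra ℝ 𝔸] [CompleteSpace 𝔸]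

theorem hasDerivAt_exp_smul_mul_mul_exp_neg_smul (X B : 𝔸) (t : ℝ) :
    HasDerivAt (fun s : ℝ => NormedSpace.exp (s • X) * B * NormedSpace.exp (-(s • X)))
      (NormedSpace.exp (t • X) * ⁅X, B⁆ * NormedSpace.exp (-(t • X))) t := by
  simp only [← smul_neg]
  convert ((hasDerivAt_exp_smul_const X t).mul_const B).fun_mul
    (hasDerivAt_exp_smul_const' (-X) t) using 1
  rw [Ring.lie_def]
  noncomm_ring

theorem map_lie_iterate_eq_zero_of_map_exp_conj_eq_zero {F : Type*} [NormedAddCommGroup F]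
    [NormedSpace ℝ F] (φ : 𝔸 →L[ℝ] F) {X B : 𝔸}
    (h : ∀ t : ℝ, φ (NormedSpace.exp (t • X) * B * NormedSpace.exp (-(t • X))) = 0) (m : ℕ) :
    φ ((fun Y => ⁅X, Y⁆)^[m] B) = 0 := by
  suffices ∀ t : ℝ, φ (NormedSpace.exp (t • X) * (fun Y => ⁅X, Y⁆)^[m] B *
      NormedSpace.exp (-(t • X))) = 0 by
    simpa using this 0
  induction m with
  | zero => exact h
  | succ m ih =>
    intro t
    have hderiv := φ.hasFDerivAt.comp_hasDerivAt t
      (hasDerivAt_exp_smul_mul_mul_exp_neg_smul X ((fun Y => ⁅X, Y⁆)^[m] B) t)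
    simp only [Function.comp_def, ih] at hderiv
    rw [Function.iterate_succ_apply']
    exact hderiv.unique (hasDerivAt_const t 0)

end ExpConj

theorem lie_conj_of_mul_eq_one {R : Type*} [Ring R] {U V : R} (hVU : V * U = 1) (a b : R) :
    ⁅U * a * V, U * b * V⁆ = U * ⁅a, b⁆ * V := by
  have cancel : ∀ x y : R, U * x * V * (U * y * V) = U * (x * y) * V := fun x y => by
    simp only [mul_assoc]
    rw [← mul_assoc V U, hVU, one_mul]
  rw [Ring.lie_def, Ring.lie_def, cancel, cancel, mul_sub, sub_mul]

namespace Matrix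

theorem trace_lie_mul {n R : Type*} [Fintype n] [CommRing R] (A B C : Matrix n n R) :
    (⁅A, B⁆ * C).trace = (A * ⁅B, C⁆).trace := by
  simp only [Ring.lie_def, sub_mul, mul_sub, trace_sub, mul_assoc]
  rw [trace_mul_comm B, mul_assoc]

theorem trace_lie_iterate_mul_eq_zero_of_trace_exp_conj_mul_eq_zero {n : Type*} [Fintype n]
    [DecidableEq n] (X B C : Matrix n n ℂ)
    (h : ∀ t : ℝ,
      (NormedSpace.exp (t • X) * B * NormedSpace.exp (-(t • X)) * C).trace = 0)
    (m : ℕ) :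
    ((fun Y => ⁅X, Y⁆)^[m] B * C).trace = 0 :=
  open scoped Norms.Operator in
  map_lie_iterate_eq_zero_of_map_exp_conj_eq_zero
    ((traceLinearMap n ℝ ℂ ∘ₗ LinearMap.mulRight ℝ C).toContinuousLinearMap) h m

end Matrix

theorem adB_eq_lie_iterate {n : ℕ} (H₀ H₁ : Matrix (Fin n) (Fin n) ℂ) (m : ℕ) :
    adB H₀ H₁ m = (fun Y => ⁅(-Complex.I) • H₀, Y⁆)^[m] ((-Complex.I) • H₁) := by
  induction m with
  | zero => rfl
  | succ m ih => rw [Function.iterate_succ_apply', ← ih, Ring.lie_def, adB]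

theorem stmt_5_general {n : ℕ} (ρ₁ ρ₂ H₀ H₁ : Matrix (Fin n) (Fin n) ℂ)
    (ρt₁ ρt₂ : ℝ → Matrix (Fin n) (Fin n) ℂ)
    (h₁ : ∀ t, ρt₁ t = NormedSpace.exp ((-(Complex.I * t)) • H₀) * ρ₁ *
        NormedSpace.exp ((Complex.I * t) • H₀))
    (h₂ : ∀ t, ρt₂ t = NormedSpace.exp ((-(Complex.I * t)) • H₀) * ρ₂ *
        NormedSpace.exp ((Complex.I * t) • H₀))
    (hf : ∀ t : ℝ, ((((-Complex.I) • H₁) * ρt₁ t - ρt₁ t * ((-Complex.I) • H₁)) *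
        ρt₂ t).trace = 0) :
    ∀ m : ℕ, (adB H₀ H₁ m * (ρ₁ * ρ₂ - ρ₂ * ρ₁)).trace = 0 := by
  intro m
  set X := (-Complex.I) • H₀
  have hV : ∀ t : ℝ, (Complex.I * ↑(-t)) • H₀ = t • X := fun t => by
    simp only [X, smul_smul, ← Complex.coe_smul]
    congr 1
    push_cast
    ring
  have hU : ∀ t : ℝ, (-(Complex.I * ↑(-t))) • H₀ = -(t • X) := fun t => by
    rw [neg_smul, hV]
  have hVU : ∀ t : ℝ, NormedSpace.exp (t • X) * NormedSpace.exp (-(t • X)) = 1 := fun t => by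
    rw [← Matrix.exp_add_of_commute _ _ (Commute.refl (t • X)).neg_right, add_neg_cancel,
      NormedSpace.exp_zero]
  rw [adB_eq_lie_iterate, ← Ring.lie_def]
  refine trace_lie_iterate_mul_eq_zero_of_trace_exp_conj_mul_eq_zero X _ _ (fun t => ?_) m
  have hf_neg := hf (-t)
  rwa [h₁, h₂, hU, hV, ← Ring.lie_def, trace_lie_mul, lie_conj_of_mul_eq_one (hVU t),
    ← mul_assoc, trace_mul_comm, ← mul_assoc, ← mul_assoc] at hf_neg

theorem stmt_5 {n : ℕ} (ρ₁ ρ₂ H₀ H₁ : Matrix (Fin n) (Fin n) ℂ)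
    (hρ₁ : ρ₁.IsHermitian) (hρ₂ : ρ₂.IsHermitian)
    (hH₀ : H₀.IsHermitian) (hH₀d : H₀.IsDiag) (hH₁ : H₁.IsHermitian)
    (ρt₁ ρt₂ : ℝ → Matrix (Fin n) (Fin n) ℂ)
    (h₁ : ∀ t, ρt₁ t = NormedSpace.exp ((-(Complex.I * t)) • H₀) * ρ₁ *
        NormedSpace.exp ((Complex.I * t) • H₀))
    (h₂ : ∀ t, ρt₂ t = NormedSpace.exp ((-(Complex.I * t)) • H₀) * ρ₂ *
        NormedSpace.exp ((Complex.I * t) • H₀))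
    (hf : ∀ t : ℝ, ((((-Complex.I) • H₁) * ρt₁ t - ρt₁ t * ((-Complex.I) • H₁)) *
        ρt₂ t).trace = 0) :
    ∀ m : ℕ, (adB H₀ H₁ m * (ρ₁ * ρ₂ - ρ₂ * ρ₁)).trace = 0 :=
  stmt_5_general ρ₁ ρ₂ H₀ H₁ ρt₁ ρt₂ h₁ h₂ hf
end

section
/- Let H₀ = diag(a₁,…,aₙ) with ω_{kℓ} = a_ℓ − a_k, and let −iH₁ be a traceless anti-Hermitian matrix with off-diagonal entries b_{kℓ} ≠ 0 for all k ≠ ℓ. If H₀ is strongly regular (the |ω_{kℓ}| for k < ℓ are nonzero and pairwise distinct), then the span of {Bₘ = ad_{−iH₀}^m(−iH₁) : m ≥ 1} equals the space of traceless anti-Hermitian matrices with zero diagonal (i.e., has dimension n²−n over ℝ). -/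
/-!
For `H₀ = diag a`, bracketing with `-iH₀` multiplies the `(i, j)` entry by `-i(aᵢ - aⱼ)`, so
`B_{2m+r} = λ^m ⊙ B_r` entrywise, with `λᵢⱼ = -(aᵢ - aⱼ)²`. Strong regularity says that `λ`
separates the unordered pairs `{k, l}`, so applying a Lagrange polynomial `Q` gives
`Q(λ) ⊙ B_r = pairMask k l ⊙ B_r` in the span. For `r = 1, 2` the `(k, l)` entries of these two
matrices are `ℝ`-independent (as `bₖₗ ≠ 0`), and an anti-Hermitian matrix is determined on the pair
`{(k, l), (l, k)}` by its `(k, l)` entry; hence every `pairMask k l ⊙ X` with `X ∈ 𝒯` lies in the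
span, and `X` is half the sum of these.
-/

open Matrix

theorem Polynomial.exists_eval_eq_ite {K ι : Type*} [Field K] [DecidableEq K] [Fintype ι]
    (f : ι → K) (x : K) : ∃ P : Polynomial K, ∀ i, P.eval (f i) = if f i = x then 1 else 0 := by
  set s := insert x (Finset.univ.image f)
  refine ⟨Lagrange.basis s id x, fun i => ?_⟩
  split_ifs with h
  · rw [h]; exact Lagrange.eval_basis_self (Set.injOn_id _) (Finset.mem_insert_self x _)
  · exact Lagrange.eval_basis_of_ne (s := s) (v := id) (Ne.symm h)
      (Finset.mem_insert_of_mem (Finset.mem_image_of_mem f (Finset.mem_univ i)))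

section

variable {ι : Type*}

def skewHermitianZeroDiag (ι : Type*) : Submodule ℝ (Matrix ι ι ℂ) where
  carrier := {X | Xᴴ = -X ∧ ∀ i, X i i = 0}
  add_mem' := by
    rintro X Y ⟨hX, hX₀⟩ ⟨hY, hY₀⟩
    exact ⟨by rw [conjTranspose_add, hX, hY, neg_add], fun i => by simp [hX₀ i, hY₀ i]⟩
  zero_mem' := ⟨by simp, fun _ => rfl⟩
  smul_mem' := by
    rintro c X ⟨hX, hX₀⟩
    exact ⟨by rw [conjTranspose_smul, hX, star_trivial, smul_neg], fun i => by simp [hX₀ i]⟩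

theorem apply_eq_neg_star_of_conjTranspose_eq_neg {X : Matrix ι ι ℂ} (hX : Xᴴ = -X) (i j : ι) :
    X i j = -star (X j i) := by
  rw [← conjTranspose_apply, hX, neg_apply, neg_neg]

variable [DecidableEq ι]

def pairMask (k l : ι) : Matrix ι ι ℂ := single k l 1 + single l k 1

theorem pairMask_hadamard_eq_of_apply_eq {k l : ι} {X Y : Matrix ι ι ℂ}
    (hX : Xᴴ = -X) (hY : Yᴴ = -Y) (h : X k l = Y k l) : pairMask k l ⊙ X = pairMask k l ⊙ Y := by
  ext i j
  simp only [pairMask, hadamard_apply, Matrix.add_apply, single_apply]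
  by_cases hkl : k = i ∧ l = j
  · obtain ⟨rfl, rfl⟩ := hkl
    rw [h]
  by_cases hlk : l = i ∧ k = j
  · obtain ⟨rfl, rfl⟩ := hlk
    rw [apply_eq_neg_star_of_conjTranspose_eq_neg hX, apply_eq_neg_star_of_conjTranspose_eq_neg hY,
      h]
  simp [hkl, hlk]

theorem pairMask_self_hadamard {X : Matrix ι ι ℂ} (hX : ∀ i, X i i = 0) (k : ι) :
    pairMask k k ⊙ X = 0 := by
  ext i j
  by_cases h : k = i ∧ k = j
  · obtain ⟨rfl, rfl⟩ := h
    simp [hX]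
  · simp [pairMask, h]

variable [Fintype ι]

theorem sum_pairMask_hadamard (X : Matrix ι ι ℂ) : ∑ k, ∑ l, pairMask k l ⊙ X = (2 : ℝ) • X := by
  have hsingle : ∀ k l, single k l (1 : ℂ) ⊙ X = single k l (X k l) := fun k l => by
    ext i j; by_cases h : k = i ∧ l = j <;> simp [h]
  simp only [pairMask, add_hadamard, hsingle, Finset.sum_add_distrib]
  rw [Finset.sum_comm (f := fun k l => single l k (X l k)), ← matrix_eq_sum_single, two_smul]

end

theorem conjTranspose_neg_I_smul {n : ℕ} {H : Matrix (Fin n) (Fin n) ℂ} (hH : H.IsHermitian) :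
    ((-Complex.I) • H)ᴴ = -((-Complex.I) • H) := by
  simp [conjTranspose_smul, hH.eq]

theorem adB_conjTranspose {n : ℕ} {H₀ H₁ : Matrix (Fin n) (Fin n) ℂ} (hH₀ : H₀.IsHermitian)
    (hH₁ : H₁.IsHermitian) (m : ℕ) : (adB H₀ H₁ m)ᴴ = -adB H₀ H₁ m := by
  induction m with
  | zero => exact conjTranspose_neg_I_smul hH₁
  | succ m ih =>
    have hA := conjTranspose_neg_I_smul hH₀
    rw [adB]
    generalize (-Complex.I) • H₀ = A at hA ⊢
    rw [conjTranspose_sub, conjTranspose_mul, conjTranspose_mul, ih, hA]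
    noncomm_ring

theorem adB_diagonal_apply {n : ℕ} (a : Fin n → ℝ) (H₁ : Matrix (Fin n) (Fin n) ℂ) (m : ℕ)
    (i j : Fin n) :
    adB (diagonal fun k => (a k : ℂ)) H₁ m i j
      = (-Complex.I * ((a i : ℂ) - a j)) ^ m * (-Complex.I * H₁ i j) := by
  induction m with
  | zero => simp [adB]
  | succ m ih =>
    simp only [adB, Matrix.sub_apply, Matrix.smul_mul, Matrix.mul_smul, Matrix.smul_apply,
      diagonal_mul, mul_diagonal, ih, smul_eq_mul, pow_succ]
    ring

theorem sum_coeff_smul_adB_mem_span {n : ℕ} (H₀ H₁ : Matrix (Fin n) (Fin n) ℂ) (Q : Polynomial ℝ)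
    {r : ℕ} (hr : 1 ≤ r) :
    ∑ m ∈ Finset.range (Q.natDegree + 1), Q.coeff m • adB H₀ H₁ (2 * m + r)
      ∈ Submodule.span ℝ {X | ∃ m : ℕ, 1 ≤ m ∧ X = adB H₀ H₁ m} :=
  Submodule.sum_mem _ fun m _ =>
    Submodule.smul_mem _ _ (Submodule.subset_span ⟨2 * m + r, by omega, rfl⟩)

section

variable {n : ℕ} (a : Fin n → ℝ) {H₁ : Matrix (Fin n) (Fin n) ℂ}

local notation "D" => diagonal fun k => (a k : ℂ)

theorem span_adB_diagonal_le (hH₁ : H₁.IsHermitian) :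
    Submodule.span ℝ {X | ∃ m : ℕ, 1 ≤ m ∧ X = adB D H₁ m} ≤ skewHermitianZeroDiag (Fin n) := by
  refine Submodule.span_le.2 ?_
  rintro _ ⟨m, hm, rfl⟩
  refine ⟨adB_conjTranspose (isHermitian_diagonal_of_self_adjoint _ ?_) hH₁ m, fun i => ?_⟩
  · ext k; simp
  · rw [adB_diagonal_apply, sub_self, mul_zero, zero_pow (by omega), zero_mul]

theorem sum_coeff_smul_adB_diagonal (Q : Polynomial ℝ) (r : ℕ) :
    ∑ m ∈ Finset.range (Q.natDegree + 1), Q.coeff m • adB D H₁ (2 * m + r)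
      = of (fun i j => ((Q.eval (-(a i - a j) ^ 2) : ℝ) : ℂ)) ⊙ adB D H₁ r := by
  ext i j
  rw [Matrix.sum_apply, hadamard_apply, of_apply, Polynomial.eval_eq_sum_range]
  push_cast
  rw [Finset.sum_mul]
  refine Finset.sum_congr rfl fun m _ => ?_
  rw [Matrix.smul_apply, adB_diagonal_apply, adB_diagonal_apply, pow_add, pow_mul,
    Complex.real_smul, mul_pow, neg_sq, Complex.I_sq]
  ring

variable (hreg₀ : ∀ k l : Fin n, k < l → a l - a k ≠ 0)
include hreg₀

theorem apply_sub_apply_ne_zero {p q : Fin n} (hpq : p ≠ q) : a p - a q ≠ 0 := by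
  rcases hpq.lt_or_gt with h | h
  · exact sub_ne_zero.2 (sub_ne_zero.1 (hreg₀ p q h)).symm
  · exact hreg₀ q p h

variable (hreg : ∀ k l p q : Fin n, k < l → p < q → |a l - a k| = |a q - a p| → k = p ∧ l = q)
include hreg

theorem sq_sub_eq_sq_sub_iff {k l : Fin n} (hkl : k ≠ l) (i j : Fin n) :
    (a i - a j) ^ 2 = (a k - a l) ^ 2 ↔ i = k ∧ j = l ∨ i = l ∧ j = k := by
  have hne : ∀ {p q : Fin n}, p ≠ q → (a p - a q) ^ 2 ≠ 0 := fun hpq =>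
    pow_ne_zero 2 (apply_sub_apply_ne_zero a hreg₀ hpq)
  have hord : ∀ {p q r s : Fin n}, p < q → r < s →
      (a p - a q) ^ 2 = (a r - a s) ^ 2 → p = r ∧ q = s := fun {p q r s} hpq hrs h => by
    refine hreg _ _ _ _ hpq hrs ?_
    rw [abs_sub_comm, abs_sub_comm (a s)]
    exact (sq_eq_sq_iff_abs_eq_abs _ _).1 h
  have hswap : ∀ p q : Fin n, (a p - a q) ^ 2 = (a q - a p) ^ 2 := fun p q => by ring
  constructor
  · intro h
    rcases lt_trichotomy i j with hij | rfl | hij <;> rcases hkl.lt_or_gt with hkl' | hkl'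
    · exact Or.inl (hord hij hkl' h)
    · exact Or.inr (hord hij hkl' (h.trans (hswap k l)))
    · exact absurd (by simpa using h.symm) (hne hkl)
    · exact absurd (by simpa using h.symm) (hne hkl)
    · exact Or.inr (hord hij hkl' ((hswap j i).trans h)).symm
    · exact Or.inl (hord hij hkl' ((hswap j i).trans (h.trans (hswap k l)))).symm
  · rintro (⟨rfl, rfl⟩ | ⟨rfl, rfl⟩)
    · rfl
    · exact hswap _ _

theorem pairMask_hadamard_adB_mem_span {k l : Fin n} (hkl : k ≠ l) {r : ℕ} (hr : 1 ≤ r) :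
    pairMask k l ⊙ adB D H₁ r ∈ Submodule.span ℝ {X | ∃ m : ℕ, 1 ≤ m ∧ X = adB D H₁ m} := by
  obtain ⟨Q, hQ⟩ := Polynomial.exists_eval_eq_ite (fun p : Fin n × Fin n => -(a p.1 - a p.2) ^ 2)
    (-(a k - a l) ^ 2)
  have hmask : of (fun i j => ((Q.eval (-(a i - a j) ^ 2) : ℝ) : ℂ)) = pairMask k l := by
    ext i j
    rw [of_apply, hQ (i, j)]
    simp only [neg_inj, sq_sub_eq_sq_sub_iff a hreg₀ hreg hkl, pairMask, Matrix.add_apply,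
      single_apply]
    by_cases h₁ : i = k ∧ j = l
    · obtain ⟨rfl, rfl⟩ := h₁
      simp [hkl.symm]
    by_cases h₂ : i = l ∧ j = k
    · obtain ⟨rfl, rfl⟩ := h₂
      simp [hkl]
    rw [if_neg (by tauto), if_neg (by tauto), if_neg (by tauto)]
    simp
  rw [← hmask, ← sum_coeff_smul_adB_diagonal]
  exact sum_coeff_smul_adB_mem_span _ _ Q hr

theorem pairMask_hadamard_mem_span (hH₁ : H₁.IsHermitian)
    (hconn : ∀ k l : Fin n, k ≠ l → H₁ k l ≠ 0) {X : Matrix (Fin n) (Fin n) ℂ}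
    (hX : X ∈ skewHermitianZeroDiag (Fin n)) {k l : Fin n} (hkl : k ≠ l) :
    pairMask k l ⊙ X ∈ Submodule.span ℝ {X | ∃ m : ℕ, 1 ≤ m ∧ X = adB D H₁ m} := by
  set δ : ℝ := a k - a l
  have hδ : δ ≠ 0 := apply_sub_apply_ne_zero a hreg₀ hkl
  set c : ℂ := δ * H₁ k l
  have hc : c ≠ 0 := mul_ne_zero (Complex.ofReal_ne_zero.2 hδ) (hconn k l hkl)
  have hB₁ : adB D H₁ 1 k l = -c := by
    rw [adB_diagonal_apply, pow_one]
    push_cast [c, δ]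
    linear_combination (a k - a l : ℂ) * H₁ k l * Complex.I_sq
  have hB₂ : adB D H₁ 2 k l = Complex.I * δ * c := by
    rw [adB_diagonal_apply]
    push_cast [c, δ]
    linear_combination (-(a k - a l : ℂ) ^ 2 * H₁ k l * Complex.I) * Complex.I_sq
  set w := X k l / c
  set Y := (-w.re) • adB D H₁ 1 + (w.im / δ) • adB D H₁ 2
  have hYS : Y ∈ Submodule.span ℝ {X | ∃ m : ℕ, 1 ≤ m ∧ X = adB D H₁ m} :=
    add_mem (Submodule.smul_mem _ _ (Submodule.subset_span ⟨1, le_rfl, rfl⟩))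
      (Submodule.smul_mem _ _ (Submodule.subset_span ⟨2, by norm_num, rfl⟩))
  have hXY : X k l = Y k l := by
    have hw : X k l = c * (w.re + w.im * Complex.I) := by
      rw [Complex.re_add_im, mul_div_cancel₀ _ hc]
    have hδ' : (δ : ℂ) ≠ 0 := Complex.ofReal_ne_zero.2 hδ
    simp only [Y, Matrix.add_apply, Matrix.smul_apply, hB₁, hB₂, Complex.real_smul, hw]
    push_cast
    field_simp
  rw [pairMask_hadamard_eq_of_apply_eq hX.1 (span_adB_diagonal_le a hH₁ hYS).1 hXY, hadamard_add,
    hadamard_smul, hadamard_smul]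
  exact add_mem
    (Submodule.smul_mem _ _ (pairMask_hadamard_adB_mem_span a hreg₀ hreg hkl le_rfl))
    (Submodule.smul_mem _ _ (pairMask_hadamard_adB_mem_span a hreg₀ hreg hkl (by norm_num)))

end

theorem stmt_6_general {n : ℕ} (a : Fin n → ℝ) (H₀ H₁ : Matrix (Fin n) (Fin n) ℂ)
    (hH₀ : H₀ = Matrix.diagonal (fun k => (a k : ℂ)))
    (hH₁ : H₁.IsHermitian)
    (hconn : ∀ k l : Fin n, k ≠ l → H₁ k l ≠ 0)
    (hreg₀ : ∀ k l : Fin n, k < l → a l - a k ≠ 0)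
    (hreg : ∀ k l p q : Fin n, k < l → p < q →
      |a l - a k| = |a q - a p| → k = p ∧ l = q) :
    (Submodule.span ℝ {X | ∃ m : ℕ, 1 ≤ m ∧ X = adB H₀ H₁ m} : Set (Matrix (Fin n) (Fin n) ℂ))
      = {X | Xᴴ = -X ∧ ∀ i, X i i = 0} := by
  subst hH₀
  refine congrArg SetLike.coe ((span_adB_diagonal_le a hH₁).antisymm fun X hX => ?_)
  have hX₂ : X = (1 / 2 : ℝ) • ∑ k, ∑ l, pairMask k l ⊙ X := by
    rw [sum_pairMask_hadamard, smul_smul]; norm_num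
  rw [hX₂]
  refine Submodule.smul_mem _ _ (Submodule.sum_mem _ fun k _ => Submodule.sum_mem _ fun l _ => ?_)
  obtain rfl | hkl := eq_or_ne k l
  · rw [pairMask_self_hadamard hX.2]
    exact Submodule.zero_mem _
  · exact pairMask_hadamard_mem_span a hreg₀ hreg hH₁ hconn hX hkl

theorem stmt_6 {n : ℕ} (a : Fin n → ℝ) (H₀ H₁ : Matrix (Fin n) (Fin n) ℂ)
    (hH₀ : H₀ = Matrix.diagonal (fun k => (a k : ℂ)))
    (hH₁ : H₁.IsHermitian) (hH₁tr : H₁.trace = 0)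
    (hconn : ∀ k l : Fin n, k ≠ l → H₁ k l ≠ 0)
    (hreg₀ : ∀ k l : Fin n, k < l → a l - a k ≠ 0)
    (hreg : ∀ k l p q : Fin n, k < l → p < q →
      |a l - a k| = |a q - a p| → k = p ∧ l = q) :
    (Submodule.span ℝ {X | ∃ m : ℕ, 1 ≤ m ∧ X = adB H₀ H₁ m} : Set (Matrix (Fin n) (Fin n) ℂ))
      = {X | Xᴴ = -X ∧ ∀ i, X i i = 0} :=
  stmt_6_general a H₀ H₁ hH₀ hH₁ hconn hreg₀ hreg
end

section
/- Let ρ_d be an n×n Hermitian matrix. If U₀ ∈ SU(n) is a critical point of the function J(U) = Tr(Uρ_dU†ρ_d) on SU(n), then ρ₀ = U₀ρ_dU₀† commutes with ρ_d: [ρ₀, ρ_d] = 0. -/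
open Matrix
open scoped ComplexOrder

/-!
Along the curve `s ↦ e^{sσ} U₀` with `σ` skew-Hermitian, `J` equals `tr(e^{sσ} ρ₀ e^{-sσ} ρ_d)`,
whose derivative at `0` is `tr(σ [ρ₀, ρ_d])`. The commutator `K = [ρ₀, ρ_d]` of two Hermitian
matrices is skew-Hermitian and traceless, hence an admissible direction, and criticality in the
direction `K` gives `tr(Kᴴ K) = -tr(K²) = 0`, i.e. `K = 0`.
-/

theorem hasDerivAt_exp_smul_mul_mul_exp_smul_neg {𝔸 : Type*} [NormedRing 𝔸]
    [NormedAlgebra ℝ 𝔸] [CompleteSpace 𝔸] (σ A : 𝔸) :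
    HasDerivAt (fun s : ℝ => NormedSpace.exp (s • σ) * A * NormedSpace.exp (s • -σ))
      (σ * A - A * σ) 0 := by
  have hexp := hasDerivAt_exp_smul_const (𝕂 := ℝ) σ 0
  have hexp_neg := hasDerivAt_exp_smul_const (𝕂 := ℝ) (-σ) 0
  simp only [zero_smul, NormedSpace.exp_zero, one_mul] at hexp hexp_neg
  refine ((hexp.mul_const A).mul hexp_neg).congr_deriv ?_
  simp only [zero_smul, NormedSpace.exp_zero, mul_one, one_mul, mul_neg, ← sub_eq_add_neg]

section Matrix

variable {m 𝕜 : Type*} [Fintype m] [DecidableEq m] [RCLike 𝕜]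

theorem conjTranspose_exp_smul_of_conjTranspose_eq_neg {σ : Matrix m m 𝕜} (hσ : σᴴ = -σ)
    (s : ℝ) : (NormedSpace.exp (s • σ))ᴴ = NormedSpace.exp (s • -σ) := by
  rw [← exp_conjTranspose, conjTranspose_smul, hσ, star_trivial]

-- `NormedSpace.exp` does not depend on the norm, so any submultiplicative one serves the calculus.
attribute [local instance] Matrix.linftyOpNormedRing Matrix.linftyOpNormedAlgebra

theorem hasDerivAt_trace_exp_smul_mul_mul_conjTranspose_mul {σ : Matrix m m 𝕜}
    (hσ : σᴴ = -σ) (U ρ ρ' : Matrix m m 𝕜) :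
    HasDerivAt
      (fun s : ℝ => ((NormedSpace.exp (s • σ) * U) * ρ * (NormedSpace.exp (s • σ) * U)ᴴ
        * ρ').trace)
      (σ * (U * ρ * Uᴴ * ρ' - ρ' * (U * ρ * Uᴴ))).trace 0 := by
  have hconj_exp (s : ℝ) :
      ((NormedSpace.exp (s • σ) * U) * ρ * (NormedSpace.exp (s • σ) * U)ᴴ * ρ').trace =
        (NormedSpace.exp (s • σ) * (U * ρ * Uᴴ) * NormedSpace.exp (s • -σ) * ρ').trace := by
    simp only [conjTranspose_mul, conjTranspose_exp_smul_of_conjTranspose_eq_neg hσ,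
      Matrix.mul_assoc]
  simp only [hconj_exp]
  have hconj := (hasDerivAt_exp_smul_mul_mul_exp_smul_neg σ (U * ρ * Uᴴ)).mul_const ρ'
  refine (((traceLinearMap m 𝕜 𝕜).restrictScalars ℝ).toContinuousLinearMap.hasFDerivAt
    |>.comp_hasDerivAt (0 : ℝ) hconj).congr_deriv ?_
  show ((σ * (U * ρ * Uᴴ) - U * ρ * Uᴴ * σ) * ρ').trace = _
  rw [Matrix.mul_sub, Matrix.sub_mul, trace_sub, trace_sub, Matrix.mul_assoc,
    trace_mul_comm (U * ρ * Uᴴ * σ), ← Matrix.mul_assoc ρ', trace_mul_comm (ρ' * _) σ]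

end Matrix

theorem stmt_8_general {n : ℕ} (ρd U₀ : Matrix (Fin n) (Fin n) ℂ)
    (hρd : ρd.IsHermitian)
    (hcrit : ∀ σ : Matrix (Fin n) (Fin n) ℂ, σᴴ = -σ → σ.trace = 0 →
      deriv (fun s : ℝ =>
        ((NormedSpace.exp (s • σ) * U₀) * ρd * (NormedSpace.exp (s • σ) * U₀)ᴴ
          * ρd).trace) 0 = 0) :
    (U₀ * ρd * U₀ᴴ) * ρd = ρd * (U₀ * ρd * U₀ᴴ) := by
  set ρ₀ := U₀ * ρd * U₀ᴴ
  have hρ₀ : ρ₀ᴴ = ρ₀ := (isHermitian_mul_mul_conjTranspose U₀ hρd).eq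
  set K := ρ₀ * ρd - ρd * ρ₀
  have hK_skew : Kᴴ = -K := by
    simp only [K, conjTranspose_sub, conjTranspose_mul, hρd.eq, hρ₀, neg_sub]
  have hK_trace : K.trace = 0 := by
    rw [trace_sub, trace_mul_comm, sub_self]
  have hKK : (K * K).trace = 0 := by
    rw [← hcrit K hK_skew hK_trace,
      (hasDerivAt_trace_exp_smul_mul_mul_conjTranspose_mul hK_skew U₀ ρd ρd).deriv]
  have hK : K = 0 := by
    rw [← trace_conjTranspose_mul_self_eq_zero_iff, hK_skew, Matrix.neg_mul, trace_neg, hKK,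
      neg_zero]
  exact sub_eq_zero.mp hK

theorem stmt_8 {n : ℕ} (ρd U₀ : Matrix (Fin n) (Fin n) ℂ)
    (hρd : ρd.IsHermitian)
    (hU₀ : U₀ ∈ Matrix.unitaryGroup (Fin n) ℂ) (hdet : U₀.det = 1)
    (hcrit : ∀ σ : Matrix (Fin n) (Fin n) ℂ, σᴴ = -σ → σ.trace = 0 →
      deriv (fun s : ℝ =>
        ((NormedSpace.exp (s • σ) * U₀) * ρd * (NormedSpace.exp (s • σ) * U₀)ᴴ
          * ρd).trace) 0 = 0) :
    (U₀ * ρd * U₀ᴴ) * ρd = ρd * (U₀ * ρd * U₀ᴴ) :=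
  stmt_8_general ρd U₀ hρd hcrit
end

section
/- Let ρ_d = diag(w₁,…,wₙ) with pairwise distinct w_k, and let ρ₀ = diag(w_{τ(1)},…,w_{τ(n)}) for a permutation τ that is neither the identity nor order-reversing (when w sorted decreasingly). Then there exists a transposition swapping two diagonal entries of ρ₀ that strictly increases Tr(ρ₀ρ_d), and another that strictly decreases it; hence ρ₀ is neither a local maximum nor a local minimum of ρ ↦ Tr(ρρ_d) on the isospectral set. -/
/-! Exchanging the entries `k` and `l` of `ρ₀` changes `∑ j, w j * w (τ j)` by
`(w k - w l) * (w (τ l) - w (τ k))`. For decreasing `w` this is positive exactly when `(k, l)` is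
an inversion of `τ`, and negative when `(k, l)` is in order. A permutation of a well-ordered set
without inversions is the identity, and applying this to `τ ∘ rev` shows that a permutation of
`Fin n` with every pair inverted is the reversal. -/

open Matrix Equiv

theorem Finset.sum_mul_comp_swap {ι R : Type*} [Fintype ι] [DecidableEq ι] [CommRing R]
    (a b : ι → R) (σ : ι → ι) {k l : ι} (hkl : k ≠ l) :
    ∑ j, a j * b (σ (swap k l j)) =
      ∑ j, a j * b (σ j) + (a k - a l) * (b (σ l) - b (σ k)) := by
  rw [← sub_eq_iff_eq_add', ← Finset.sum_sub_distrib, Fintype.sum_eq_add k l hkl]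
  · simp only [swap_apply_left, swap_apply_right]
    ring
  · intro j hj
    rw [swap_apply_of_ne_of_ne hj.1 hj.2, sub_self]

namespace Equiv.Perm

variable {ι : Type*} [LinearOrder ι] [WellFoundedLT ι]

theorem eq_refl_of_strictMono {σ : Perm ι} (hσ : StrictMono σ) : σ = Equiv.refl ι := by
  have h : (σ : ι → ι) = id := by
    rw [← hσ.range_inj strictMono_id, Set.range_id, Set.range_eq_univ]
    exact σ.surjective
  exact Equiv.ext (congrFun h)

theorem exists_inversion_of_ne_refl {σ : Perm ι} (hσ : σ ≠ Equiv.refl ι) :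
    ∃ i j, i < j ∧ σ j < σ i := by
  contrapose! hσ
  exact eq_refl_of_strictMono fun i j hij => (hσ i j hij).lt_of_ne (σ.injective.ne hij.ne)

end Equiv.Perm

theorem Fin.exists_lt_and_lt_of_ne_revPerm {n : ℕ} {σ : Perm (Fin n)} (hσ : σ ≠ Fin.revPerm) :
    ∃ i j, i < j ∧ σ i < σ j := by
  have hrev : Fin.revPerm.trans σ ≠ Equiv.refl (Fin n) := fun h =>
    hσ (Fin.revPerm_symm ▸ Equiv.trans_eq_refl_iff_symm_eq.mp h).symm
  obtain ⟨i, j, hij, hσij⟩ := Perm.exists_inversion_of_ne_refl hrev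
  exact ⟨Fin.rev j, Fin.rev i, Fin.rev_lt_rev.mpr hij, hσij⟩

theorem stmt_11 {n : ℕ} (w : Fin n → ℝ) (hw : StrictAnti w)
    (τ : Equiv.Perm (Fin n)) (hid : τ ≠ Equiv.refl (Fin n)) (hrev : τ ≠ Fin.revPerm) :
    (∃ k l : Fin n, k ≠ l ∧ (w k - w l) * (w (τ l) - w (τ k)) > 0 ∧
        ∑ j, w j * w (τ (Equiv.swap k l j)) > ∑ j, w j * w (τ j)) ∧
    (∃ k l : Fin n, k ≠ l ∧ (w k - w l) * (w (τ l) - w (τ k)) < 0 ∧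
        ∑ j, w j * w (τ (Equiv.swap k l j)) < ∑ j, w j * w (τ j)) := by
  constructor
  · obtain ⟨k, l, hkl, hτ⟩ := Perm.exists_inversion_of_ne_refl hid
    have hpos : (w k - w l) * (w (τ l) - w (τ k)) > 0 :=
      mul_pos (sub_pos.mpr (hw hkl)) (sub_pos.mpr (hw hτ))
    refine ⟨k, l, hkl.ne, hpos, ?_⟩
    rw [Finset.sum_mul_comp_swap w w τ hkl.ne]
    linarith
  · obtain ⟨k, l, hkl, hτ⟩ := Fin.exists_lt_and_lt_of_ne_revPerm hrev
    have hneg : (w k - w l) * (w (τ l) - w (τ k)) < 0 :=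
      mul_neg_of_pos_of_neg (sub_pos.mpr (hw hkl)) (sub_neg.mpr (hw hτ))
    refine ⟨k, l, hkl.ne, hneg, ?_⟩
    rw [Finset.sum_mul_comp_swap w w τ hkl.ne]
    linarith
end

section
/- For a permutation τ of {1,…,n} and pairwise distinct reals w₁>…>wₙ, the Hessian of J(x) = Tr(e^{x·σ} ρ₀ e^{−x·σ} ρ_d) at x = 0, restricted to the directions σ ∈ {λ_{kℓ}, λ̄_{kℓ}}, is diagonal with the entry in direction λ_{kℓ} (and λ̄_{kℓ}) equal to 2(w_{τ(k)} − w_{τ(ℓ)})(w_ℓ − w_k), which is nonzero; hence all n! critical points are nondegenerate on the flag manifold. -/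
/-!
At `x = 0` the second derivative of `J` in the direction `σ` is
`2 Tr(σ² ρ₀ ρ_d) - 2 Tr(σ ρ₀ σ ρ_d)`. For `σ = λ_{kℓ}` or `λ̄_{kℓ}`, conjugating a diagonal
matrix by `σ` keeps only the `(k, ℓ)` block, swaps its two diagonal entries and flips the sign;
with the identity in place of `ρ₀` this also gives `σ² = -(e_{kk} + e_{ℓℓ})`. Both traces are
then read off the diagonal, and their difference factors as
`(w_{τ(k)} - w_{τ(ℓ)}) (w_ℓ - w_k)`, which is nonzero because `w ∘ τ` is injective.
-/

open Matrix

/-- The su(n) generators λ_{kℓ} = i(e_{kℓ} + e_{ℓk}). -/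
noncomputable def lam {n : ℕ} (k l : Fin n) : Matrix (Fin n) (Fin n) ℂ :=
  Complex.I • (Matrix.single k l 1 + Matrix.single l k 1)

/-- The su(n) generators λ̄_{kℓ} = e_{kℓ} − e_{ℓk}. -/
noncomputable def lamBar {n : ℕ} (k l : Fin n) : Matrix (Fin n) (Fin n) ℂ :=
  Matrix.single k l 1 - Matrix.single l k 1

namespace Matrix

variable {ι R : Type*} [Fintype ι] [DecidableEq ι]

theorem single_mul_diagonal [NonUnitalNonAssocSemiring R] (a b : ι) (c : R) (f : ι → R) :
    single a b c * diagonal f = single a b (c * f b) := by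
  ext i j
  rw [mul_diagonal, single_apply, single_apply]
  split_ifs with h
  · rw [h.2]
  · rw [zero_mul]

theorem two_mul_trace_sq_mul_sub_trace_conj_of_conj_diagonal [CommRing R]
    {σ : Matrix ι ι R} {k l : ι}
    (hσ : ∀ g : ι → R, σ * diagonal g * σ = -(single k k (g l) + single l l (g k)))
    (f g : ι → R) :
    2 * ((σ * σ * diagonal g * diagonal f).trace - (σ * diagonal g * σ * diagonal f).trace)
      = 2 * (g k - g l) * (f l - f k) := by
  have hsq : σ * σ = -(single k k 1 + single l l 1) := by
    simpa using hσ 1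
  rw [hsq, hσ]
  simp only [neg_mul, add_mul, single_mul_diagonal, trace_neg, trace_add,
    trace_single_eq_same, one_mul]
  ring

end Matrix

section Generators

variable {n : ℕ} {k l : Fin n}

theorem lam_mul_diagonal_mul_lam (hkl : k ≠ l) (g : Fin n → ℂ) :
    lam k l * diagonal g * lam k l = -(single k k (g l) + single l l (g k)) := by
  simp only [lam, Matrix.smul_mul, Matrix.mul_smul, add_mul, mul_add, single_mul_diagonal,
    one_mul, single_mul_single_same, single_mul_single_of_ne _ _ _ _ hkl,
    single_mul_single_of_ne _ _ _ _ hkl.symm, mul_one, zero_add, add_zero]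
  rw [← smul_add, smul_smul, Complex.I_mul_I, neg_one_smul, add_comm]

theorem lamBar_mul_diagonal_mul_lamBar (hkl : k ≠ l) (g : Fin n → ℂ) :
    lamBar k l * diagonal g * lamBar k l = -(single k k (g l) + single l l (g k)) := by
  simp only [lamBar, sub_mul, mul_sub, single_mul_diagonal, one_mul, single_mul_single_same,
    single_mul_single_of_ne _ _ _ _ hkl, single_mul_single_of_ne _ _ _ _ hkl.symm, mul_one]
  abel

end Generators

theorem stmt_12 {n : ℕ} (w : Fin n → ℝ) (hw : StrictAnti w)
    (τ : Equiv.Perm (Fin n))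
    (ρd ρ₀ : Matrix (Fin n) (Fin n) ℂ)
    (hρd : ρd = Matrix.diagonal (fun k => (w k : ℂ)))
    (hρ₀ : ρ₀ = Matrix.diagonal (fun k => (w (τ k) : ℂ)))
    (k l : Fin n) (hkl : k ≠ l) :
    (2 * ((lam k l * lam k l * ρ₀ * ρd).trace - (lam k l * ρ₀ * lam k l * ρd).trace)
        = ((2 * (w (τ k) - w (τ l)) * (w l - w k) : ℝ) : ℂ)) ∧
    (2 * ((lamBar k l * lamBar k l * ρ₀ * ρd).trace
          - (lamBar k l * ρ₀ * lamBar k l * ρd).trace)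
        = ((2 * (w (τ k) - w (τ l)) * (w l - w k) : ℝ) : ℂ)) ∧
    (2 * (w (τ k) - w (τ l)) * (w l - w k) : ℝ) ≠ 0 := by
  subst hρd hρ₀
  refine ⟨?_, ?_, ?_⟩
  · rw [two_mul_trace_sq_mul_sub_trace_conj_of_conj_diagonal (lam_mul_diagonal_mul_lam hkl)]
    push_cast
    ring
  · rw [two_mul_trace_sq_mul_sub_trace_conj_of_conj_diagonal
      (lamBar_mul_diagonal_mul_lamBar hkl)]
    push_cast
    ring
  · have hτ : w (τ k) - w (τ l) ≠ 0 :=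
      sub_ne_zero.mpr fun h => hkl (τ.injective (hw.injective h))
    have hw' : w l - w k ≠ 0 := sub_ne_zero.mpr fun h => hkl (hw.injective h).symm
    exact mul_ne_zero (mul_ne_zero two_ne_zero hτ) hw'
end

section
/- Let B₀ be as above (invertible, block-diagonal with blocks ω_j·[[0,1],[−1,0]], ω_j real nonzero), u, v ∈ ℝᴺ with block components u_j = c_j(Im b_j, Re b_j)ᵀ, v_j = (Im b_j, Re b_j)ᵀ, c_j real. If iβ (β real) is an eigenvalue of B = B₀ − uvᵀ and iβ is not an eigenvalue of B₀ (i.e., β² ≠ ω_j² for all j), then a contradiction arises: 1 = vᵀ(B₀ − iβI)⁻¹u, but vᵀ(B₀−iβI)⁻¹u = (−iβ/1)·Σ_j c_j|b_j|²/(ω_j²−β²) is purely imaginary. Hence every purely imaginary eigenvalue of B is an eigenvalue of B₀. -/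
/-!
If `(B₀ - u vᵀ) x = μ x` with `x ≠ 0` and `μ` is not an eigenvalue of `B₀`, then
`x = (vᵀ x) (B₀ - μ)⁻¹ u` with `vᵀ x ≠ 0`, hence `vᵀ (B₀ - μ)⁻¹ u = 1`. For `μ = iβ` the inverse of
the block `ω [[0, 1], [-1, 0]] - iβ` is `(ω² - β²)⁻¹ [[-iβ, -ω], [ω, -iβ]]`, whose quadratic form
at the real vector `(Im b, Re b)` is `-iβ |b|² / (ω² - β²)`. So
`vᵀ (B₀ - iβ)⁻¹ u = -iβ ∑ⱼ cⱼ |bⱼ|² / (ωⱼ² - β²)` is purely imaginary and cannot be `1`.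
-/

open Matrix

open Complex

section RankOnePerturbation

variable {K n : Type*} [CommRing K] [IsDomain K] [Fintype n]

theorem dotProduct_eq_one_of_sub_vecMulVec_mulVec_eq_smul {A : Matrix n n K}
    {u v x y : n → K} {μ : K} (hμ : ∀ z, A *ᵥ z = μ • z → z = 0)
    (hy : A *ᵥ y - μ • y = u) (hx0 : x ≠ 0) (hx : (A - vecMulVec u v) *ᵥ x = μ • x) :
    v ⬝ᵥ y = 1 := by
  set s := v ⬝ᵥ x
  have hx' : A *ᵥ x - s • u = μ • x := by
    rwa [sub_mulVec, vecMulVec_mulVec, op_smul_eq_smul] at hx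
  have hxy : x = s • y := by
    rw [← sub_eq_zero]
    apply hμ
    rw [mulVec_sub, mulVec_smul]
    linear_combination (norm := module) hx' - s • hy
  have hs : s ≠ 0 := fun hs => hx0 (by rw [hxy, hs, zero_smul])
  apply mul_left_cancel₀ hs
  calc s * (v ⬝ᵥ y) = v ⬝ᵥ x := by rw [hxy, dotProduct_smul, smul_eq_mul]
    _ = s * 1 := (mul_one s).symm

end RankOnePerturbation

section BlockDiagonal

variable {ι κ α : Type*} [Fintype ι] [DecidableEq ι] [Fintype κ]

/-- Unlike `Matrix.blockDiagonal`, the block index is the first coordinate. -/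
def blockDiagonalFst [Zero α] (M : ι → Matrix κ κ α) : Matrix (ι × κ) (ι × κ) α :=
  of fun p q => if p.1 = q.1 then M p.1 p.2 q.2 else 0

theorem blockDiagonalFst_mulVec [NonUnitalNonAssocSemiring α] (M : ι → Matrix κ κ α)
    (x : ι × κ → α) (p : ι × κ) :
    (blockDiagonalFst M *ᵥ x) p = (M p.1 *ᵥ fun k => x (p.1, k)) p.2 := by
  simp [blockDiagonalFst, mulVec, dotProduct, Fintype.sum_prod_type, ite_mul]

theorem dotProduct_blockDiagonalFst_mulVec [NonUnitalNonAssocSemiring α] (M : ι → Matrix κ κ α)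
    (x y : ι × κ → α) :
    y ⬝ᵥ (blockDiagonalFst M *ᵥ x) = ∑ i, (fun k => y (i, k)) ⬝ᵥ (M i *ᵥ fun k => x (i, k)) := by
  simp only [dotProduct, Fintype.sum_prod_type, blockDiagonalFst_mulVec]

theorem eq_zero_of_blockDiagonalFst_mulVec_eq_smul [Semiring α] {M : ι → Matrix κ κ α} {μ : α}
    (hM : ∀ i z, M i *ᵥ z = μ • z → z = 0) {x : ι × κ → α}
    (hx : blockDiagonalFst M *ᵥ x = μ • x) : x = 0 := by
  ext ⟨i, k⟩
  have hblock : M i *ᵥ (fun k => x (i, k)) = μ • fun k => x (i, k) := by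
    ext k
    simpa [blockDiagonalFst_mulVec] using congrFun hx (i, k)
  exact congrFun (hM i _ hblock) k

theorem blockDiagonalFst_mulVec_sub_smul_eq [Ring α] {M R : ι → Matrix κ κ α} {μ : α}
    (hMR : ∀ i w, M i *ᵥ (R i *ᵥ w) - μ • (R i *ᵥ w) = w) (u : ι × κ → α) :
    blockDiagonalFst M *ᵥ (blockDiagonalFst R *ᵥ u) - μ • (blockDiagonalFst R *ᵥ u) = u := by
  ext ⟨i, k⟩
  have hRu : (fun k => (blockDiagonalFst R *ᵥ u) (i, k)) = R i *ᵥ fun k => u (i, k) := by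
    ext k
    exact blockDiagonalFst_mulVec R u (i, k)
  calc (blockDiagonalFst M *ᵥ (blockDiagonalFst R *ᵥ u) - μ • (blockDiagonalFst R *ᵥ u)) (i, k)
      = (M i *ᵥ (R i *ᵥ fun k => u (i, k)) - μ • (R i *ᵥ fun k => u (i, k))) k := by
        rw [Pi.sub_apply, Pi.smul_apply, blockDiagonalFst_mulVec M, hRu,
          blockDiagonalFst_mulVec R]
        rfl
    _ = u (i, k) := congrFun (hMR i _) k

end BlockDiagonal

section QuarterTurn

variable {K : Type*} [Field K]

theorem eq_zero_of_smul_rot_mulVec_eq_smul {ω μ : K} (h : ω ^ 2 + μ ^ 2 ≠ 0) {z : Fin 2 → K}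
    (hz : (ω • !![0, 1; -1, 0]) *ᵥ z = μ • z) : z = 0 := by
  have h0 := congrFun hz 0
  have h1 := congrFun hz 1
  simp only [smul_of, mulVec, dotProduct, Fin.sum_univ_two, of_apply, Pi.smul_apply,
    smul_eq_mul, cons_val_zero, cons_val_one, cons_val_fin_one] at h0 h1
  have hz0 : (ω ^ 2 + μ ^ 2) * z 0 = 0 := by linear_combination (-μ) * h0 - ω * h1
  have hz1 : (ω ^ 2 + μ ^ 2) * z 1 = 0 := by linear_combination ω * h0 - μ * h1
  ext k
  fin_cases k
  · simpa [h] using hz0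
  · simpa [h] using hz1

def rotResolvent (ω μ : K) : Matrix (Fin 2) (Fin 2) K :=
  (ω ^ 2 + μ ^ 2)⁻¹ • !![-μ, -ω; ω, -μ]

theorem smul_rot_mulVec_rotResolvent_mulVec_sub {ω μ : K} (h : ω ^ 2 + μ ^ 2 ≠ 0)
    (w : Fin 2 → K) :
    (ω • !![0, 1; -1, 0]) *ᵥ (rotResolvent ω μ *ᵥ w) - μ • (rotResolvent ω μ *ᵥ w) = w := by
  ext k
  fin_cases k <;>
  · simp [rotResolvent, dotProduct, Fin.sum_univ_two]
    field_simp
    ring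

theorem dotProduct_rotResolvent_mulVec_self (ω μ a b : K) :
    ![a, b] ⬝ᵥ (rotResolvent ω μ *ᵥ ![a, b]) = -μ * (a ^ 2 + b ^ 2) / (ω ^ 2 + μ ^ 2) := by
  simp [rotResolvent, mulVec, dotProduct, Fin.sum_univ_two]
  ring

end QuarterTurn

theorem ofReal_sq_add_I_mul_ofReal_sq (ω β : ℝ) :
    (ω : ℂ) ^ 2 + (I * β) ^ 2 = ((ω ^ 2 - β ^ 2 : ℝ) : ℂ) := by
  push_cast
  linear_combination (β : ℂ) ^ 2 * I_sq

theorem re_dotProduct_rotResolvent_I_mul_mulVec_self (ω β a b : ℝ) :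
    (![(a : ℂ), b] ⬝ᵥ (rotResolvent (ω : ℂ) (I * β) *ᵥ ![(a : ℂ), b])).re = 0 := by
  rw [dotProduct_rotResolvent_mulVec_self, ofReal_sq_add_I_mul_ofReal_sq, div_ofReal_re]
  simp [← ofReal_pow]

theorem stmt_17_general {m : ℕ} (ω c : Fin m → ℝ) (b : Fin m → ℂ)
    (B₀ : Matrix (Fin m × Fin 2) (Fin m × Fin 2) ℂ)
    (hB₀ : B₀ = Matrix.of fun p q =>
      if p.1 = q.1 then (ω p.1 : ℂ) * (!![0, 1; -1, 0] p.2 q.2) else 0)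
    (u v : Fin m × Fin 2 → ℂ)
    (hu : u = fun p => (c p.1 : ℂ) * (![((b p.1).im : ℂ), ((b p.1).re : ℂ)] p.2))
    (hv : v = fun p => ![((b p.1).im : ℂ), ((b p.1).re : ℂ)] p.2)
    (β : ℝ)
    (heig : ∃ x : Fin m × Fin 2 → ℂ, x ≠ 0 ∧
      (B₀ - Matrix.vecMulVec u v) *ᵥ x = (Complex.I * β) • x) :
    ∃ j, β ^ 2 = ω j ^ 2 := by
  by_contra! hβ
  obtain ⟨x, hx0, hx⟩ := heig
  obtain rfl : B₀ = blockDiagonalFst fun j => (ω j : ℂ) • !![0, 1; -1, 0] := hB₀.trans rfl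
  have hdet : ∀ j, (ω j : ℂ) ^ 2 + (I * β) ^ 2 ≠ 0 := fun j => by
    rw [ofReal_sq_add_I_mul_ofReal_sq, ofReal_ne_zero, sub_ne_zero]
    exact (hβ j).symm
  have hnot_eig := fun z => eq_zero_of_blockDiagonalFst_mulVec_eq_smul (x := z)
    fun j _ => eq_zero_of_smul_rot_mulVec_eq_smul (hdet j)
  have hresolvent := blockDiagonalFst_mulVec_sub_smul_eq
    (R := fun j => rotResolvent (ω j : ℂ) (I * β))
    (fun j => smul_rot_mulVec_rotResolvent_mulVec_sub (hdet j)) u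
  have hone := dotProduct_eq_one_of_sub_vecMulVec_mulVec_eq_smul hnot_eig hresolvent hx0 hx
  have hblock : ∀ j, ((fun k => v (j, k)) ⬝ᵥ
      (rotResolvent (ω j : ℂ) (I * β) *ᵥ fun k => u (j, k))).re = 0 := fun j => by
    have hvj : (fun k => v (j, k)) = ![((b j).im : ℂ), ((b j).re : ℂ)] := by subst hv; rfl
    have huj : (fun k => u (j, k)) = (c j : ℂ) • ![((b j).im : ℂ), ((b j).re : ℂ)] := by
      subst hu; rfl
    rw [hvj, huj, mulVec_smul, dotProduct_smul, smul_eq_mul, re_ofReal_mul,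
      re_dotProduct_rotResolvent_I_mul_mulVec_self, mul_zero]
  have hre := congrArg re hone
  rw [dotProduct_blockDiagonalFst_mulVec, re_sum, Finset.sum_eq_zero fun j _ => hblock j] at hre
  simp at hre

theorem stmt_17 {m : ℕ} (ω c : Fin m → ℝ) (b : Fin m → ℂ)
    (hω : ∀ j, ω j ≠ 0)
    (B₀ : Matrix (Fin m × Fin 2) (Fin m × Fin 2) ℂ)
    (hB₀ : B₀ = Matrix.of fun p q =>
      if p.1 = q.1 then (ω p.1 : ℂ) * (!![0, 1; -1, 0] p.2 q.2) else 0)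
    (u v : Fin m × Fin 2 → ℂ)
    (hu : u = fun p => (c p.1 : ℂ) * (![((b p.1).im : ℂ), ((b p.1).re : ℂ)] p.2))
    (hv : v = fun p => ![((b p.1).im : ℂ), ((b p.1).re : ℂ)] p.2)
    (β : ℝ)
    (heig : ∃ x : Fin m × Fin 2 → ℂ, x ≠ 0 ∧
      (B₀ - Matrix.vecMulVec u v) *ᵥ x = (Complex.I * β) • x) :
    ∃ j, β ^ 2 = ω j ^ 2 :=
  stmt_17_general ω c b B₀ hB₀ u v hu hv β heig
end
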